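/- arXiv:0902.1041 — 2 statements merged into one kernel-verified Lean document; each statement's English description precedes it below -/
import Mathlib

section
/- There exists a computable function f : ℕ → ℕ such that K(n) ≤ f(n) + O(1) for all n and f(n) ≤ K(n) + O(1) for infinitely many n. (Existence of Solovay functions.) -/
open Filter

namespace Solovay

/-- Length of the string coded by `n` via the length-lexicographic bijection
(the string coded by `n` is the binary expansion of `n+1` with the leading `1` removed). -/
def strLen (n : ℕ) : ℕ := Nat.log 2 (n + 1)

/-- `x` is a prefix of `y`, viewing naturals as strings via the length-lex bijection. -/
def StrPrefix (x y : ℕ) : Prop := ∃ m, (y + 1) / 2 ^ m = x + 1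

/-- A partial computable machine (given by a code) is prefix-free if its domain is
a prefix-free set of strings. -/
def PrefixFree (c : Nat.Partrec.Code) : Prop :=
  ∀ p q, (c.eval p).Dom → (c.eval q).Dom → StrPrefix p q → p = q

/-- Prefix-free Kolmogorov complexity `K` (defined, up to an additive constant,
as via a fixed universal prefix-free machine, by charging each prefix-free machine
its index plus one). -/
noncomputable def K (x : ℕ) : ℕ :=
  sInf {k | ∃ c p, PrefixFree c ∧ x ∈ c.eval p ∧ k = Encodable.encode c + 1 + strLen p}

/-- Plain Kolmogorov complexity `C`. -/
noncomputable def C (x : ℕ) : ℕ :=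
  sInf {k | ∃ (c : Nat.Partrec.Code) (p : ℕ), x ∈ c.eval p ∧ k = Encodable.encode c + 1 + strLen p}

/-- The first `n` bits of the sequence `α`, coded as a string/natural number. -/
def seg (α : ℕ → Bool) : ℕ → ℕ
  | 0 => 0
  | n + 1 => 2 * seg α n + 1 + (if α n then 1 else 0)

/-- Martin-Löf randomness of a binary sequence, via the Levin–Schnorr characterization. -/
def MLRandomSeq (α : ℕ → Bool) : Prop := ∃ c : ℕ, ∀ n, n ≤ K (seg α n) + c

/-- The real number in `[0,1]` whose binary expansion is `α`. -/
noncomputable def realOf (α : ℕ → Bool) : ℝ :=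
  ∑' n, if α n then (1 / 2 : ℝ) ^ (n + 1) else 0

/-- Martin-Löf randomness of a real: some binary expansion of it is Martin-Löf random. -/
def MLRandomReal (r : ℝ) : Prop := ∃ α : ℕ → Bool, r = realOf α ∧ MLRandomSeq α

/-- A Solovay function: a computable upper bound of `K` (up to an additive constant)
which is within a constant of `K` infinitely often. -/
def SolovayFunction (f : ℕ → ℕ) : Prop :=
  Computable f ∧ (∃ c, ∀ n, K n ≤ f n + c) ∧ (∃ c, {n | f n ≤ K n + c}.Infinite)

/-- K-triviality of a binary sequence. -/
def KTrivial (α : ℕ → Bool) : Prop := ∃ c, ∀ n, K (seg α n) ≤ K n + c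

/-- Number of bits selected by the selection rule `s` among the first `n` bits of `α`. -/
def selCount (s : ℕ → Bool) (α : ℕ → Bool) (n : ℕ) : ℕ :=
  ((Finset.range n).filter fun i => s (seg α i) = true).card

/-- Number of selected bits equal to `1` among the first `n` bits of `α`. -/
def selOnes (s : ℕ → Bool) (α : ℕ → Bool) (n : ℕ) : ℕ :=
  ((Finset.range n).filter fun i => s (seg α i) = true ∧ α i = true).card

/-- Church stochasticity: every total computable selection rule which selects
infinitely many bits selects a subsequence whose frequency of ones tends to `1/2`. -/
def ChurchStochastic (α : ℕ → Bool) : Prop :=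
  ∀ s : ℕ → Bool, Computable s →
    Tendsto (fun n => selCount s α n) atTop atTop →
    Tendsto (fun n => (selOnes s α n : ℝ) / (selCount s α n : ℝ)) atTop (nhds (1 / 2))

/-- Schnorr randomness: `α` passes every Schnorr test, i.e. every uniformly computable
enumeration of prefix-free sets of strings whose Lebesgue measure is exactly `2^{-n}`
at level `n`. -/
def SchnorrRandom (α : ℕ → Bool) : Prop :=
  ∀ g : ℕ → ℕ → Option ℕ, Computable₂ g →
    (∀ n w w', (∃ i, g n i = some w) → (∃ i, g n i = some w') → StrPrefix w w' → w = w') →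
    (∀ n, ∑' w : {w // ∃ i, g n i = some w}, (1 / 2 : ℝ) ^ strLen (w : ℕ) = (1 / 2 : ℝ) ^ n) →
    ¬ ∀ n, ∃ w, (∃ i, g n i = some w) ∧ seg α (strLen w) = w

/-!
Put `f ⟨e, p, t⟩ = e + 1 + |p|` when `t` is the first step at which machine `e` has halted
on `p` while no other string comparable with `p` has, and `f n = n` otherwise. A prefix-free
machine reading `1^e 0 p` can search for that `t`, so `K ⟨e, p, t⟩ ≤ f ⟨e, p, t⟩ + O(1)`, and
a unary machine gives `K n ≤ n + O(1)`. Conversely, if `(e, p)` is an optimal description of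
`x` then `f ⟨e, p, t⟩ = K x`, and since `x` is computable from `⟨e, p, t⟩`,
`K x ≤ K ⟨e, p, t⟩ + O(1)`; distinct `x` give distinct triples.
-/

open Nat.Partrec (Code)
open Nat.Partrec.Code (evaln)
open Denumerable (ofNat)
open Encodable (encode)

def encStr (l : List Bool) : ℕ := l.foldl (fun n b => 2 * n + 1 + b.toNat) 0

theorem encStr_nil : encStr [] = 0 := rfl

theorem encStr_concat (l : List Bool) (b : Bool) :
    encStr (l ++ [b]) = 2 * encStr l + 1 + b.toNat := by
  simp [encStr]

theorem encStr_append (s t : List Bool) :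
    encStr (s ++ t) = encStr s * 2 ^ t.length + encStr t := by
  induction t using List.reverseRecOn with
  | nil => simp [encStr_nil]
  | append_singleton t b ih =>
    rw [← List.append_assoc, encStr_concat, encStr_concat, ih, List.length_append,
      List.length_singleton, pow_succ]
    ring

theorem encStr_add_one_mem_Ico (l : List Bool) :
    2 ^ l.length ≤ encStr l + 1 ∧ encStr l + 1 < 2 ^ (l.length + 1) := by
  induction l using List.reverseRecOn with
  | nil => simp [encStr_nil]
  | append_singleton l b ih =>
    rw [encStr_concat, List.length_append, List.length_singleton, pow_succ, pow_succ]
    have := b.toNat_le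
    omega

theorem strLen_encStr (l : List Bool) : strLen (encStr l) = l.length :=
  Nat.log_eq_of_pow_le_of_lt_pow (encStr_add_one_mem_Ico l).1 (encStr_add_one_mem_Ico l).2

theorem encStr_surjective : Function.Surjective encStr := by
  intro n
  induction n using Nat.strong_induction_on with
  | _ n ih =>
    rcases n with _ | n
    · exact ⟨[], rfl⟩
    · obtain ⟨l, hl⟩ := ih (n / 2) (by omega)
      refine ⟨l ++ [decide (n % 2 = 1)], ?_⟩
      rw [encStr_concat, hl]
      rcases Nat.mod_two_eq_zero_or_one n with h | h <;> simp [h] <;> omega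

theorem encStr_injective : Function.Injective encStr := by
  intro l l' h
  induction l using List.reverseRecOn generalizing l' with
  | nil =>
    rcases l'.eq_nil_or_concat' with rfl | ⟨L, b, rfl⟩
    · rfl
    · rw [encStr_nil, encStr_concat] at h
      omega
  | append_singleton l b ih =>
    rcases l'.eq_nil_or_concat' with rfl | ⟨L, b', rfl⟩
    · rw [encStr_nil, encStr_concat] at h
      omega
    · rw [encStr_concat, encStr_concat] at h
      obtain rfl : b = b' := by
        cases b <;> cases b' <;> simp only [Bool.toNat_true, Bool.toNat_false] at h <;>
          first | rfl | omega
      rw [ih (by omega : encStr l = encStr L)]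

theorem encStr_append_add_one_div (s u : List Bool) :
    (encStr (s ++ u) + 1) / 2 ^ u.length = encStr s + 1 := by
  have hu := encStr_add_one_mem_Ico u
  rw [pow_succ] at hu
  rw [encStr_append, Nat.add_assoc, mul_comm, Nat.mul_add_div (Nat.two_pow_pos _),
    Nat.div_eq_of_lt_le (k := 1) (by omega) (by omega)]

theorem strPrefix_encStr {s t : List Bool} : StrPrefix (encStr s) (encStr t) ↔ s <+: t := by
  constructor
  · rintro ⟨m, hm⟩
    have ht := encStr_add_one_mem_Ico t
    have hm_le : m ≤ t.length := by
      by_contra! hlt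
      have : encStr t + 1 < 2 ^ m :=
        ht.2.trans_le (Nat.pow_le_pow_right (by norm_num) hlt)
      rw [Nat.div_eq_of_lt this] at hm
      omega
    set k := t.length - m
    have hsplit := List.take_append_drop k t
    have hdrop : (t.drop k).length = m := by simp [k]; omega
    have htake : encStr (t.take k) = encStr s := by
      have := encStr_append_add_one_div (t.take k) (t.drop k)
      rw [hsplit, hdrop, hm] at this
      omega
    exact ⟨t.drop k, by rw [← encStr_injective htake, hsplit]⟩
  · rintro ⟨u, rfl⟩
    exact ⟨u.length, encStr_append_add_one_div s u⟩

theorem StrPrefix.refl (x : ℕ) : StrPrefix x x := ⟨0, by simp⟩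

theorem strPrefix_iff_exists_lt {x y : ℕ} :
    StrPrefix x y ↔ ∃ m < y + 1, (y + 1) / 2 ^ m = x + 1 := by
  refine ⟨fun ⟨m, hm⟩ => ⟨m, ?_, hm⟩, fun ⟨m, _, hm⟩ => ⟨m, hm⟩⟩
  by_contra! hle
  have : y + 1 < 2 ^ m := hle.trans_lt Nat.lt_two_pow_self
  rw [Nat.div_eq_of_lt this] at hm
  omega

instance : DecidableRel StrPrefix := fun _ _ => decidable_of_iff _ strPrefix_iff_exists_lt.symm

/-- The self-delimiting code `1^e 0 p` of the pair `(e, p)`. -/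
def delimPair (e p : ℕ) : ℕ := (2 ^ (e + 2) - 3) * 2 ^ strLen p + p

theorem encStr_replicate_true (e : ℕ) : encStr (List.replicate e true) = 2 ^ (e + 1) - 2 := by
  induction e with
  | zero => rfl
  | succ e ih =>
    rw [List.replicate_succ', encStr_concat, ih, pow_succ 2 (e + 1)]
    have := Nat.one_lt_two_pow (n := e + 1) (by omega)
    simp only [Bool.toNat_true]
    omega

theorem delimPair_encStr (e : ℕ) (l : List Bool) :
    delimPair e (encStr l) = encStr (List.replicate e true ++ false :: l) := by
  rw [← List.singleton_append, ← List.append_assoc, encStr_append, encStr_concat,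
    encStr_replicate_true, delimPair, strLen_encStr, pow_succ 2 (e + 1)]
  have := Nat.one_lt_two_pow (n := e + 1) (by omega)
  simp only [Bool.toNat_false]
  congr 2
  omega

theorem strLen_delimPair (e p : ℕ) : strLen (delimPair e p) = e + 1 + strLen p := by
  obtain ⟨l, rfl⟩ := encStr_surjective p
  rw [delimPair_encStr, strLen_encStr, strLen_encStr, List.length_append, List.length_replicate,
    List.length_cons]
  omega

theorem replicate_true_append_false_prefix {a b : ℕ} {u v : List Bool}
    (h : List.replicate a true ++ false :: u <+: List.replicate b true ++ false :: v) :
    a = b ∧ u <+: v := by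
  induction a generalizing b with
  | zero => cases b <;> simp_all [List.replicate_succ, List.cons_prefix_cons]
  | succ a ih =>
    cases b with
    | zero => simp [List.replicate_succ, List.cons_prefix_cons] at h
    | succ b =>
      simp only [List.replicate_succ, List.cons_append, List.cons_prefix_cons, true_and] at h
      exact (ih h).imp_left (congrArg _)

theorem StrPrefix.of_delimPair {e p e' p' : ℕ}
    (h : StrPrefix (delimPair e p) (delimPair e' p')) : e = e' ∧ StrPrefix p p' := by
  obtain ⟨l, rfl⟩ := encStr_surjective p
  obtain ⟨l', rfl⟩ := encStr_surjective p'
  rw [delimPair_encStr, delimPair_encStr, strPrefix_encStr] at h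
  rw [strPrefix_encStr]
  exact replicate_true_append_false_prefix h

theorem primrec_two_pow : Primrec fun n : ℕ => 2 ^ n :=
  (Primrec₂.unpaired'.1 Nat.Primrec.pow : Primrec₂ ((· ^ ·) : ℕ → ℕ → ℕ)).comp
    (Primrec.const 2) Primrec.id

theorem strLen_eq_findGreatest (n : ℕ) :
    strLen n = Nat.findGreatest (fun k => 2 ^ k ≤ n + 1) n := by
  symm
  rw [Nat.findGreatest_eq_iff]
  refine ⟨?_, fun _ => Nat.pow_log_le_self 2 (by omega), fun k hk _ hle => ?_⟩
  · exact Nat.lt_succ_iff.1 ((Nat.lt_two_pow_self).trans_le (Nat.pow_log_le_self 2 (by omega)))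
  · exact absurd hle (not_le.2 ((Nat.lt_pow_succ_log_self one_lt_two _).trans_le
      (Nat.pow_le_pow_right two_pos hk)))

theorem primrec_strLen : Primrec strLen := by
  have h : PrimrecRel fun n k : ℕ => 2 ^ k ≤ n + 1 :=
    Primrec.nat_le.comp (primrec_two_pow.comp Primrec.snd) (Primrec.succ.comp Primrec.fst)
  exact (Primrec.nat_findGreatest Primrec.id h).of_eq fun n => (strLen_eq_findGreatest n).symm

theorem primrec_delimPair : Primrec₂ delimPair :=
  Primrec.nat_add.comp
    (Primrec.nat_mul.comp
      (Primrec.nat_sub.comp (primrec_two_pow.comp (Primrec.nat_add.comp Primrec.fst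
        (Primrec.const 2))) (Primrec.const 3))
      (primrec_two_pow.comp (primrec_strLen.comp Primrec.snd)))
    Primrec.snd

theorem primrecRel_strPrefix : PrimrecRel StrPrefix := by
  have h : PrimrecRel fun (m : ℕ) (xy : ℕ × ℕ) => (xy.2 + 1) / 2 ^ m = xy.1 + 1 :=
    Primrec.eq.comp
      (Primrec.nat_div.comp (Primrec.succ.comp (Primrec.snd.comp Primrec.snd))
        (primrec_two_pow.comp Primrec.fst))
      (Primrec.succ.comp (Primrec.fst.comp Primrec.snd))
  have h' : PrimrecPred fun xy : ℕ × ℕ => ∃ m ∈ List.range (xy.2 + 1),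
      (xy.2 + 1) / 2 ^ m = xy.1 + 1 :=
    (PrimrecRel.exists_mem_list h).comp (Primrec.list_range.comp (Primrec.succ.comp Primrec.snd))
      Primrec.id
  exact h'.of_eq fun _ => by simp [strPrefix_iff_exists_lt]

/-- For each `e`, the strings `p` with `IsolatedHalt e p t` for some `t` are pairwise
incomparable, even when machine `e` is not prefix-free. The bound `q < t` loses nothing, since
`evaln t` fails on inputs `≥ t`. -/
def IsolatedHalt (e p t : ℕ) : Prop :=
  evaln t (ofNat Code e) p ≠ none ∧
    ∀ q < t, q ≠ p → StrPrefix q p ∨ StrPrefix p q → evaln t (ofNat Code e) q = none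

instance (e p t : ℕ) : Decidable (IsolatedHalt e p t) := by
  unfold IsolatedHalt; infer_instance

def FirstIsolatedHalt (e p t : ℕ) : Prop :=
  IsolatedHalt e p t ∧ ∀ t' < t, ¬IsolatedHalt e p t'

instance (e p t : ℕ) : Decidable (FirstIsolatedHalt e p t) := by
  unfold FirstIsolatedHalt; infer_instance

theorem exists_isolatedHalt {c : Code} {p x : ℕ} (hc : PrefixFree c) (hx : x ∈ c.eval p) :
    ∃ t, IsolatedHalt (encode c) p t := by
  obtain ⟨t, ht⟩ := Nat.Partrec.Code.evaln_complete.1 hx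
  refine ⟨t, ?_, fun q _ hqp hcomp => ?_⟩ <;> rw [Denumerable.ofNat_encode]
  · exact Option.ne_none_iff_exists'.2 ⟨x, ht⟩
  · by_contra hq
    obtain ⟨y, hy⟩ := Option.ne_none_iff_exists'.1 hq
    have hq_dom : (c.eval q).Dom := Part.dom_iff_mem.2 ⟨y, Nat.Partrec.Code.evaln_sound hy⟩
    have hp_dom : (c.eval p).Dom := Part.dom_iff_mem.2 ⟨x, hx⟩
    rcases hcomp with hcomp | hcomp
    · exact hqp (hc q p hq_dom hp_dom hcomp)
    · exact hqp (hc p q hp_dom hq_dom hcomp).symm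

theorem exists_firstIsolatedHalt {c : Code} {p x : ℕ} (hc : PrefixFree c) (hx : x ∈ c.eval p) :
    ∃ t, FirstIsolatedHalt (encode c) p t :=
  have h := exists_isolatedHalt hc hx
  ⟨Nat.find h, Nat.find_spec h, fun _ => Nat.find_min h⟩

theorem IsolatedHalt.eq_of_mem_evaln {e p p' t t' x : ℕ} (h' : IsolatedHalt e p' t')
    (hx : x ∈ evaln t (ofNat Code e) p) (ht : t ≤ t')
    (hcomp : StrPrefix p p' ∨ StrPrefix p' p) : p = p' := by
  by_contra hne
  have hnone := h'.2 p ((Nat.Partrec.Code.evaln_bound hx).trans_le ht) hne hcomp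
  have hsome : evaln t' (ofNat Code e) p = some x := Nat.Partrec.Code.evaln_mono ht hx
  simp [hnone] at hsome

theorem IsolatedHalt.eq_of_strPrefix {e p p' t t' : ℕ} (h : IsolatedHalt e p t)
    (h' : IsolatedHalt e p' t') (hpp' : StrPrefix p p') : p = p' := by
  obtain ⟨x, hx⟩ := Option.ne_none_iff_exists'.1 h.1
  obtain ⟨x', hx'⟩ := Option.ne_none_iff_exists'.1 h'.1
  rcases le_total t t' with htt' | ht't
  · exact h'.eq_of_mem_evaln hx htt' (.inl hpp')
  · exact (h.eq_of_mem_evaln hx' ht't (.inr hpp')).symm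

theorem FirstIsolatedHalt.eq_of_strPrefix {e p p' t t' : ℕ} (h : FirstIsolatedHalt e p t)
    (h' : FirstIsolatedHalt e p' t') (hpp' : StrPrefix p p') : p = p' ∧ t = t' := by
  obtain rfl := h.1.eq_of_strPrefix h'.1 hpp'
  refine ⟨rfl, le_antisymm ?_ ?_⟩ <;> by_contra! hlt
  exacts [h.2 t' hlt h'.1, h'.2 t hlt h.1]

theorem primrec_evaln_triple :
    Primrec fun m : ℕ × ℕ × ℕ => evaln m.2.2 (ofNat Code m.1) m.2.1 :=
  Nat.Partrec.Code.primrec_evaln.comp <| Primrec.pair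
    (Primrec.pair (Primrec.snd.comp Primrec.snd) ((Primrec.ofNat Code).comp Primrec.fst))
    (Primrec.fst.comp Primrec.snd)

theorem primrecPred_isolatedHalt :
    PrimrecPred fun m : ℕ × ℕ × ℕ => IsolatedHalt m.1 m.2.1 m.2.2 := by
  have hq : Primrec fun a : ℕ × ℕ × ℕ × ℕ => a.1 := Primrec.fst
  have hp : Primrec fun a : ℕ × ℕ × ℕ × ℕ => a.2.2.1 :=
    Primrec.fst.comp (Primrec.snd.comp Primrec.snd)
  have hevq : Primrec fun a : ℕ × ℕ × ℕ × ℕ => evaln a.2.2.2 (ofNat Code a.2.1) a.1 :=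
    primrec_evaln_triple.comp <| Primrec.pair (Primrec.fst.comp Primrec.snd)
      (Primrec.pair Primrec.fst (Primrec.snd.comp (Primrec.snd.comp Primrec.snd)))
  have hsilent : PrimrecRel fun (q : ℕ) (m : ℕ × ℕ × ℕ) =>
      q ≠ m.2.1 → StrPrefix q m.2.1 ∨ StrPrefix m.2.1 q →
        evaln m.2.2 (ofNat Code m.1) q = none :=
    ((Primrec.eq.comp hq hp).or
      (((primrecRel_strPrefix.comp hq hp).or (primrecRel_strPrefix.comp hp hq)).not.or
        (Primrec.eq.comp hevq (Primrec.const none)))).of_eq fun _ => by tauto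
  have hall : PrimrecPred fun m : ℕ × ℕ × ℕ => ∀ q ∈ List.range m.2.2,
      q ≠ m.2.1 → StrPrefix q m.2.1 ∨ StrPrefix m.2.1 q →
        evaln m.2.2 (ofNat Code m.1) q = none :=
    (PrimrecRel.forall_mem_list hsilent).comp
      (Primrec.list_range.comp (Primrec.snd.comp Primrec.snd)) Primrec.id
  exact ((Primrec.eq.comp primrec_evaln_triple (Primrec.const none)).not.and hall).of_eq
    fun _ => by simp [IsolatedHalt]

theorem primrecPred_firstIsolatedHalt :
    PrimrecPred fun m : ℕ × ℕ × ℕ => FirstIsolatedHalt m.1 m.2.1 m.2.2 := by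
  have hearlier : PrimrecRel fun (t' : ℕ) (m : ℕ × ℕ × ℕ) => ¬IsolatedHalt m.1 m.2.1 t' :=
    (primrecPred_isolatedHalt.comp (Primrec.pair (Primrec.fst.comp Primrec.snd)
      (Primrec.pair (Primrec.fst.comp (Primrec.snd.comp Primrec.snd)) Primrec.fst))).not
  have hall : PrimrecPred fun m : ℕ × ℕ × ℕ => ∀ t' ∈ List.range m.2.2,
      ¬IsolatedHalt m.1 m.2.1 t' :=
    (PrimrecRel.forall_mem_list hearlier).comp
      (Primrec.list_range.comp (Primrec.snd.comp Primrec.snd)) Primrec.id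
  exact (primrecPred_isolatedHalt.and hall).of_eq fun _ => by simp [FirstIsolatedHalt]

def runTriple (m : ℕ × ℕ × ℕ) : ℕ := (evaln m.2.2 (ofNat Code m.1) m.2.1).getD 0

theorem primrec_runTriple : Primrec runTriple :=
  Primrec.option_getD.comp primrec_evaln_triple (Primrec.const 0)

theorem runTriple_eq {c : Code} {p t x : ℕ} (h : IsolatedHalt (encode c) p t)
    (hx : x ∈ c.eval p) : runTriple (encode c, p, t) = x := by
  obtain ⟨y, hy⟩ := Option.ne_none_iff_exists'.1 h.1
  rw [Denumerable.ofNat_encode] at hy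
  have hyx : y = x := Part.mem_unique (Nat.Partrec.Code.evaln_sound hy) hx
  simp only [runTriple, Denumerable.ofNat_encode]
  rw [hy, hyx, Option.getD_some]

theorem mem_rfindOpt_of_unique {α : Type*} {f : ℕ → Option α} {n : ℕ} {a : α}
    (hn : f n = some a) (huniq : ∀ k b, f k = some b → k = n) : a ∈ Nat.rfindOpt f := by
  have hdom : (Nat.rfindOpt f).Dom := Nat.rfindOpt_dom.2 ⟨n, a, hn⟩
  obtain ⟨k, hk⟩ := Nat.rfindOpt_spec (Part.get_mem hdom)
  obtain rfl := huniq k _ hk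
  exact ⟨hdom, Option.some_inj.1 (hk.symm.trans hn)⟩

theorem K_le_of_mem {x : ℕ} {c : Code} {p : ℕ} (hc : PrefixFree c) (hx : x ∈ c.eval p) :
    K x ≤ encode c + 1 + strLen p :=
  Nat.sInf_le ⟨c, p, hc, hx, rfl⟩

def DelimPrefixFree (R : ℕ × ℕ × ℕ → Prop) : Prop :=
  ∀ m m', R m → R m' → StrPrefix (delimPair m.1 m.2.1) (delimPair m'.1 m'.2.1) → m = m'

section DelimSearch

variable (R : ℕ × ℕ × ℕ → Prop) [DecidablePred R] (G : ℕ × ℕ × ℕ → ℕ)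

def delimTest (q : ℕ) (m : ℕ × ℕ × ℕ) : Option ℕ :=
  if q = delimPair m.1 m.2.1 ∧ R m then some (G m) else none

/-- The machine which on input `delimPair e p` searches for `t` with `R (e, p, t)` and then
outputs `G (e, p, t)`. -/
def delimSearch (q : ℕ) : Part ℕ :=
  Nat.rfindOpt fun n => delimTest R G q (ofNat (ℕ × ℕ × ℕ) n)

variable {R G}

theorem partrec_delimSearch (hR : PrimrecPred R) (hG : Computable G) :
    Partrec (delimSearch R G) := by
  have htest : Computable₂ (delimTest R G) := by
    have hc : PrimrecPred fun a : ℕ × ℕ × ℕ × ℕ => a.1 = delimPair a.2.1 a.2.2.1 ∧ R a.2 :=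
      (Primrec.eq.comp Primrec.fst (primrec_delimPair.comp (Primrec.fst.comp Primrec.snd)
        (Primrec.fst.comp (Primrec.snd.comp Primrec.snd)))).and (hR.comp Primrec.snd)
    exact (Computable.cond hc.decide.to_comp
      (Computable.option_some.comp (hG.comp Computable.snd)) (Computable.const none)).of_eq
      fun a => by simp [delimTest]
  exact Partrec.rfindOpt (htest.comp Computable.fst ((Computable.ofNat _).comp Computable.snd))

theorem exists_of_delimSearch_dom {q : ℕ} (h : (delimSearch R G q).Dom) :
    ∃ m, R m ∧ q = delimPair m.1 m.2.1 := by
  obtain ⟨n, a, ha⟩ := Nat.rfindOpt_dom.1 h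
  by_cases hq : q = delimPair (ofNat (ℕ × ℕ × ℕ) n).1 (ofNat (ℕ × ℕ × ℕ) n).2.1 ∧
    R (ofNat _ n)
  · exact ⟨_, hq.2, hq.1⟩
  · rw [Option.mem_def, delimTest, if_neg hq] at ha
    cases ha

theorem mem_delimSearch (hR : DelimPrefixFree R) {m : ℕ × ℕ × ℕ} (hm : R m) :
    G m ∈ delimSearch R G (delimPair m.1 m.2.1) := by
  refine mem_rfindOpt_of_unique (n := encode m)
    (by rw [Denumerable.ofNat_encode, delimTest, if_pos ⟨rfl, hm⟩]) fun k b hk => ?_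
  by_cases hq : delimPair m.1 m.2.1 = delimPair (ofNat (ℕ × ℕ × ℕ) k).1
      (ofNat (ℕ × ℕ × ℕ) k).2.1 ∧ R (ofNat _ k)
  · rw [← hR _ _ hq.2 hm (hq.1 ▸ .refl _), Denumerable.encode_ofNat]
  · rw [delimTest, if_neg hq] at hk
    cases hk

theorem prefixFree_of_eval_eq_delimSearch (hR : DelimPrefixFree R) {c : Code}
    (hc : c.eval = delimSearch R G) : PrefixFree c := by
  intro q q' hq hq' hqq'
  rw [hc] at hq hq'
  obtain ⟨m, hm, rfl⟩ := exists_of_delimSearch_dom hq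
  obtain ⟨m', hm', rfl⟩ := exists_of_delimSearch_dom hq'
  rw [hR m m' hm hm' hqq']

theorem exists_prefixFree_delimSearch (hR : PrimrecPred R) (hfree : DelimPrefixFree R)
    (hG : Computable G) :
    ∃ c : Code, PrefixFree c ∧ ∀ m, R m → G m ∈ c.eval (delimPair m.1 m.2.1) := by
  obtain ⟨c, hc⟩ := Nat.Partrec.Code.exists_code.1
    (Partrec.nat_iff.1 (partrec_delimSearch hR hG))
  exact ⟨c, prefixFree_of_eval_eq_delimSearch hfree hc,
    fun m hm => hc ▸ mem_delimSearch hfree hm⟩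

theorem exists_K_le_of_delimPrefixFree (hR : PrimrecPred R) (hfree : DelimPrefixFree R)
    (hG : Computable G) : ∃ k, ∀ m, R m → K (G m) ≤ m.1 + strLen m.2.1 + k := by
  obtain ⟨c, hc, hmem⟩ := exists_prefixFree_delimSearch hR hfree hG
  refine ⟨encode c + 2, fun m hm => ?_⟩
  have := K_le_of_mem hc (hmem m hm)
  rw [strLen_delimPair] at this
  omega

end DelimSearch

theorem exists_prefixFree_unary :
    ∃ c : Code, PrefixFree c ∧ ∀ n, n ∈ c.eval (delimPair n 0) := by
  have hR : DelimPrefixFree fun m : ℕ × ℕ × ℕ => m.2 = (0, 0) := fun m m' hm hm' h =>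
    Prod.ext h.of_delimPair.1 (hm.trans hm'.symm)
  obtain ⟨c, hc, hmem⟩ := exists_prefixFree_delimSearch
    (Primrec.eq.comp Primrec.snd (Primrec.const _)) hR Computable.fst
  exact ⟨c, hc, fun n => hmem (n, 0, 0) rfl⟩

theorem exists_K_le_add : ∃ k, ∀ n, K n ≤ n + k := by
  obtain ⟨c, hc, hmem⟩ := exists_prefixFree_unary
  refine ⟨encode c + 2 + strLen 0, fun n => ?_⟩
  have := K_le_of_mem hc (hmem n)
  rw [strLen_delimPair] at this
  omega

theorem exists_K_eq (x : ℕ) :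
    ∃ c p, PrefixFree c ∧ x ∈ c.eval p ∧ K x = encode c + 1 + strLen p := by
  obtain ⟨c, hc, hmem⟩ := exists_prefixFree_unary
  have hne : {k | ∃ c p, PrefixFree c ∧ x ∈ c.eval p ∧ k = encode c + 1 + strLen p}.Nonempty :=
    ⟨_, c, delimPair x 0, hc, hmem x, rfl⟩
  exact Nat.sInf_mem hne

theorem delimPrefixFree_firstIsolatedHalt :
    DelimPrefixFree fun m : ℕ × ℕ × ℕ => FirstIsolatedHalt m.1 m.2.1 m.2.2 := by
  rintro ⟨e, p, t⟩ ⟨e', p', t'⟩ hm hm' h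
  obtain ⟨rfl, hp⟩ := h.of_delimPair
  obtain ⟨rfl, rfl⟩ := hm.eq_of_strPrefix hm' hp
  rfl

theorem exists_K_comp_le {g : ℕ → ℕ} (hg : Computable g) :
    ∃ k, ∀ x, K (g x) ≤ K x + k := by
  obtain ⟨k, hk⟩ := exists_K_le_of_delimPrefixFree primrecPred_firstIsolatedHalt
    delimPrefixFree_firstIsolatedHalt (hg.comp primrec_runTriple.to_comp)
  refine ⟨k, fun x => ?_⟩
  obtain ⟨c, p, hc, hx, hK⟩ := exists_K_eq x
  obtain ⟨t, ht⟩ := exists_firstIsolatedHalt hc hx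
  have := hk (encode c, p, t) ht
  simp only [runTriple_eq ht.1 hx] at this
  omega

def solovayFn (n : ℕ) : ℕ :=
  let m := ofNat (ℕ × ℕ × ℕ) n
  if FirstIsolatedHalt m.1 m.2.1 m.2.2 then m.1 + 1 + strLen m.2.1 else n

theorem solovayFn_encode (m : ℕ × ℕ × ℕ) : solovayFn (encode m) =
    if FirstIsolatedHalt m.1 m.2.1 m.2.2 then m.1 + 1 + strLen m.2.1 else encode m := by
  simp only [solovayFn, Denumerable.ofNat_encode]

theorem computable_solovayFn : Computable solovayFn :=
  (Primrec.ite (primrecPred_firstIsolatedHalt.comp (Primrec.ofNat _))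
    (Primrec.nat_add.comp (Primrec.succ.comp (Primrec.fst.comp (Primrec.ofNat _)))
      (primrec_strLen.comp (Primrec.fst.comp (Primrec.snd.comp (Primrec.ofNat _)))))
    Primrec.id).to_comp

theorem exists_K_le_solovayFn_add : ∃ k, ∀ n, K n ≤ solovayFn n + k := by
  obtain ⟨k₁, hk₁⟩ := exists_K_le_add
  obtain ⟨k₂, hk₂⟩ := exists_K_le_of_delimPrefixFree primrecPred_firstIsolatedHalt
    delimPrefixFree_firstIsolatedHalt Computable.encode
  refine ⟨k₁ + k₂, fun n => ?_⟩
  obtain ⟨m, rfl⟩ : ∃ m : ℕ × ℕ × ℕ, encode m = n := ⟨_, Denumerable.encode_ofNat n⟩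
  rw [solovayFn_encode]
  split_ifs with h
  · have := hk₂ m h
    omega
  · have := hk₁ (encode m)
    omega

theorem exists_solovayFn_le_K_add_infinite : ∃ k, {n | solovayFn n ≤ K n + k}.Infinite := by
  obtain ⟨k, hk⟩ :=
    exists_K_comp_le (primrec_runTriple.to_comp.comp (Computable.ofNat (ℕ × ℕ × ℕ)))
  choose c p hc hx hK using exists_K_eq
  choose t ht using fun x => exists_firstIsolatedHalt (hc x) (hx x)
  let n x := encode (encode (c x), p x, t x)
  have hrun x : runTriple (ofNat _ (n x)) = x := by
    rw [Denumerable.ofNat_encode, runTriple_eq (ht x).1 (hx x)]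
  have hf x : solovayFn (n x) = K x := by
    rw [solovayFn_encode, if_pos (ht x), hK x]
  refine ⟨k, Set.infinite_of_injective_forall_mem (f := n)
    (fun x y hxy => by rw [← hrun x, hxy, hrun]) fun x => ?_⟩
  have := hk (n x)
  rw [hrun] at this
  show solovayFn (n x) ≤ K (n x) + k
  rwa [hf]

theorem solovayFunction_solovayFn : SolovayFunction solovayFn :=
  ⟨computable_solovayFn, exists_K_le_solovayFn_add, exists_solovayFn_le_K_add_infinite⟩

theorem solovay_function_exists :
    ∃ f : ℕ → ℕ, Computable f ∧ (∃ c : ℕ, ∀ n, K n ≤ f n + c) ∧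
      (∃ c : ℕ, {n | f n ≤ K n + c}.Infinite) :=
  ⟨solovayFn, solovayFunction_solovayFn⟩

end Solovay
end

section
/- If there exists a computable function f with K ≤ f + O(1) and liminf (f(n) − K(n)) < ∞, then there exists a computable function f' such that f'(n) ≥ K(n) for all n and f'(n) = K(n) for infinitely many n. -/
open Filter

namespace Solovay

/-! Adding the constant to `f` gives a computable `g ≥ K` whose gap `g - K` is bounded on an
infinite set, so some gap value is attained infinitely often; let `d` be the least one. Only
finitely many `n` have gap below `d`, so `g - d`, left equal to `g` on an initial segment
containing them, is an upper bound of `K` attained wherever the gap is exactly `d`. -/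

theorem exists_infinite_fiber_finite_lt {α : Type*} (u : α → ℕ) {b : ℕ}
    (hb : {x | u x ≤ b}.Infinite) :
    ∃ d, {x | u x = d}.Infinite ∧ {x | u x < d}.Finite := by
  classical
  have hex : ∃ j, {x | u x = j}.Infinite := by
    by_contra! hfin
    refine hb (((Set.finite_Iic b).biUnion fun j _ => hfin j).subset ?_)
    exact fun x hx => Set.mem_biUnion (Set.mem_Iic.mpr hx) rfl
  refine ⟨Nat.find hex, Nat.find_spec hex, ?_⟩
  refine ((Set.finite_Iio _).biUnion fun j hj =>
    Set.not_infinite.mp (Nat.find_min hex (Set.mem_Iio.mp hj))).subset ?_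
  exact fun x hx => Set.mem_biUnion hx rfl

theorem computable_ite_le_sub {g : ℕ → ℕ} (hg : Computable g) (M d : ℕ) :
    Computable fun n => if n ≤ M then g n else g n - d := by
  have hle : ComputablePred fun n => n ≤ M :=
    (Primrec.nat_le.comp Primrec.id (Primrec.const M)).computablePred
  exact hle.ite hg ((Primrec.nat_sub.comp Primrec.id (Primrec.const d)).to_comp.comp hg)

theorem exists_computable_exact_upper_bound {g k : ℕ → ℕ} (hg : Computable g)
    (hkg : ∀ n, k n ≤ g n) {b : ℕ} (hb : {n | g n ≤ k n + b}.Infinite) :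
    ∃ f' : ℕ → ℕ, Computable f' ∧ (∀ n, k n ≤ f' n) ∧ {n | f' n = k n}.Infinite := by
  obtain ⟨d, hd, hlt⟩ := exists_infinite_fiber_finite_lt (fun n => g n - k n) (b := b)
    (hb.mono fun n (hn : g n ≤ k n + b) => show g n - k n ≤ b by omega)
  obtain ⟨M, hM⟩ := hlt.bddAbove
  refine ⟨_, computable_ite_le_sub hg M d, fun n => ?_, ?_⟩
  · split_ifs with hn
    · exact hkg n
    · have : ¬ g n - k n < d := fun h => hn (hM h)
      have := hkg n
      omega
  · refine (hd.sdiff (Set.finite_Iic M)).mono ?_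
    rintro n ⟨hn : g n - k n = d, hnM : ¬ n ≤ M⟩
    have := hkg n
    show (if n ≤ M then g n else g n - d) = k n
    rw [if_neg hnM]
    omega

theorem exact_upper_bound_of_solovay
    (h : ∃ f : ℕ → ℕ, SolovayFunction f) :
    ∃ f' : ℕ → ℕ, Computable f' ∧ (∀ n, K n ≤ f' n) ∧ {n | f' n = K n}.Infinite := by
  obtain ⟨f, hf, ⟨c₁, hc₁⟩, ⟨c₂, hc₂⟩⟩ := h
  refine exists_computable_exact_upper_bound (g := fun n => f n + c₁) (b := c₁ + c₂)
    (Primrec.nat_add.to_comp.comp hf (Computable.const c₁)) hc₁ ?_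
  exact hc₂.mono fun n (hn : f n ≤ K n + c₂) => show f n + c₁ ≤ K n + (c₁ + c₂) by omega

end Solovay
end
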